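/- arXiv:2006.08394 — 6 statements merged into one kernel-verified Lean document; each statement's English description precedes it below -/
import Mathlib

section
/- Let U and V be finite subsets of a commutative group G, and let X ⊆ U be a nonempty subset such that |X+V|/|X| ≤ |X'+V|/|X'| for all nonempty subsets X' ⊆ X. Then for any finite set W ⊆ G, |X+V+W| ≤ |X+V|·|X+W|/|X|. -/
/-!
This is Petridis' form of the Plünnecke inequality, available in Mathlib as
`Finset.pluennecke_petridis_inequality_add`; only the minimality hypothesis has to be moved from
ratios of real numbers to cross-multiplied natural numbers.
-/

open Finset Pointwise

theorem Finset.card_add_mul_card_le_of_forall_div_le {G : Type*} [Add G] [DecidableEq G]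
    {V X : Finset G}
    (hmin : ∀ X' ⊆ X, X'.Nonempty →
      ((X + V).card : ℝ) / X.card ≤ ((X' + V).card : ℝ) / X'.card) :
    ∀ X' ⊆ X, #(X + V) * #X' ≤ #(X' + V) * #X := by
  intro X' hX'
  obtain rfl | hne := X'.eq_empty_or_nonempty
  · simp
  have hX'pos : (0 : ℝ) < #X' := mod_cast hne.card_pos
  have hXpos : (0 : ℝ) < #X := mod_cast (hne.mono hX').card_pos
  exact_mod_cast (div_le_div_iff₀ hXpos hX'pos).1 (hmin X' hX' hne)

theorem plunnecke_ineq_general {G : Type*} [AddCommGroup G] [DecidableEq G]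
    (V W X : Finset G) (hX : X.Nonempty)
    (hmin : ∀ X' ⊆ X, X'.Nonempty →
      ((X + V).card : ℝ) / X.card ≤ ((X' + V).card : ℝ) / X'.card) :
    ((X + V + W).card : ℝ) ≤ ((X + V).card : ℝ) * (X + W).card / X.card := by
  have h := pluennecke_petridis_inequality_add W (card_add_mul_card_le_of_forall_div_le hmin)
  rw [add_comm W X, add_right_comm X W V] at h
  rw [le_div_iff₀ (mod_cast hX.card_pos)]
  exact_mod_cast h

theorem plunnecke_ineq {G : Type*} [AddCommGroup G] [DecidableEq G]
    (U V W X : Finset G) (hXU : X ⊆ U) (hX : X.Nonempty)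
    (hmin : ∀ X' ⊆ X, X'.Nonempty →
      ((X + V).card : ℝ) / X.card ≤ ((X' + V).card : ℝ) / X'.card) :
    ((X + V + W).card : ℝ) ≤ ((X + V).card : ℝ) * (X + W).card / X.card :=
  plunnecke_ineq_general V W X hX hmin
end

section
/- Let A be a finite subset of a commutative group with |A+A| ≤ K|A|. Then |A+A+A| ≤ K^3|A|. -/
open Finset Pointwise

theorem triple_sumset_bound {G : Type*} [AddCommGroup G] [DecidableEq G]
    (A : Finset G) (hA : A.Nonempty) (K : ℝ)
    (h : ((A + A).card : ℝ) ≤ K * A.card) :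
    ((A + A + A).card : ℝ) ≤ K ^ 3 * A.card := by
  have hcard : (0 : ℝ) < A.card := by exact_mod_cast hA.card_pos
  have key := Finset.pluennecke_ruzsa_inequality_nsmul_add hA A 3
  have h3 : A + A + A = 3 • A := by
    rw [show (3 : ℕ) = 2 + 1 by rfl, add_nsmul, two_nsmul, one_nsmul]
  have key' : ((A + A + A).card : ℝ) ≤ (((A + A).card : ℝ) / A.card) ^ 3 * A.card := by
    rw [h3]
    have := (NNRat.cast_le (K := ℝ)).2 key
    push_cast at this
    exact this
  have hK : ((A + A).card : ℝ) / A.card ≤ K := (div_le_iff₀ hcard).2 h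
  have h0 : (0 : ℝ) ≤ ((A + A).card : ℝ) / A.card := by positivity
  calc ((A + A + A).card : ℝ) ≤ (((A + A).card : ℝ) / A.card) ^ 3 * A.card := key'
    _ ≤ K ^ 3 * A.card := by gcongr
end

section
/- Let U and V be finite nonempty subsets of a commutative group. For d ∈ V−U define V_d = V ∩ (d+U). Then the set P of d ∈ V−U with |V_d| ≥ |U||V|/(2|U+V|) is nonempty. -/
/-!
Write `r(d) = #(V ∩ (d + U))` for the number of representations `d = v - u`. Then
`∑ r(d) = |U||V|` and `∑ r(d)² = E(U, V)`, so `E(U, V) ≤ (max r) |U||V|`, while Cauchy–Schwarz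
gives `|U|²|V|² ≤ |U + V| E(U, V)`. Hence the most popular difference has
`r(d) ≥ |U||V| / |U + V|`, twice the required bound.
-/

open Finset Pointwise Combinatorics.Additive

namespace Finset

section AddGroup

variable {G : Type*} [AddGroup G] [DecidableEq G]

lemma sum_addConvolution (A B : Finset G) : ∑ x ∈ A + B, A.addConvolution B x = #A * #B := by
  rw [← card_product]
  exact (card_eq_sum_card_fiberwise fun ab hab ↦
    add_mem_add (mem_product.1 hab).1 (mem_product.1 hab).2).symm

lemma exists_addEnergy_le_addConvolution_mul {A B : Finset G} (hA : A.Nonempty)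
    (hB : B.Nonempty) : ∃ x ∈ A + B, E[A, B] ≤ A.addConvolution B x * (#A * #B) := by
  obtain ⟨x, hx, hmax⟩ := exists_max_image (A + B) (A.addConvolution B) (hA.add hB)
  refine ⟨x, hx, ?_⟩
  calc E[A, B] = ∑ y ∈ A + B, A.addConvolution B y * A.addConvolution B y := by
        simp only [addEnergy_eq_sum_sq', sq]; rfl
    _ ≤ ∑ y ∈ A + B, A.addConvolution B x * A.addConvolution B y :=
        sum_le_sum fun y hy ↦ Nat.mul_le_mul_right _ (hmax y hy)
    _ = A.addConvolution B x * (#A * #B) := by rw [← mul_sum, sum_addConvolution]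

end AddGroup

section AddCommGroup

variable {G : Type*} [AddCommGroup G] [DecidableEq G]

/-- `(a₁, a₂) ↦ (-a₂, -a₁)` turns `a₁ + b₁ = a₂ + b₂` into `-a₂ + b₁ = -a₁ + b₂`. -/
lemma addEnergy_neg_right (s t : Finset G) : E[s, -t] = E[s, t] := by
  refine card_equiv ((Equiv.refl _).prodCongr
    ((Equiv.prodComm _ _).trans ((Equiv.neg G).prodCongr (Equiv.neg G)))) fun x ↦ ?_
  obtain ⟨⟨a₁, a₂⟩, b₁, b₂⟩ := x
  simp only [mem_filter, mem_product, mem_neg', Equiv.prodCongr_apply, Equiv.coe_refl,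
    Equiv.trans_apply, Equiv.prodComm_apply, Prod.map, Prod.swap, Equiv.neg_apply,
    ← sub_eq_add_neg, sub_eq_sub_iff_add_eq_add, id]
  constructor <;> rintro ⟨⟨⟨h₁, h₂⟩, h₃, h₄⟩, h⟩ <;> exact ⟨⟨⟨h₁, h₂⟩, h₄, h₃⟩, by rw [h]⟩

lemma exists_card_mul_card_le_card_add_mul_addConvolution_neg {A B : Finset G}
    (hA : A.Nonempty) (hB : B.Nonempty) :
    ∃ x ∈ A - B, #A * #B ≤ #(A + B) * A.addConvolution (-B) x := by
  obtain ⟨x, hx, hE⟩ := exists_addEnergy_le_addConvolution_mul hA hB.neg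
  rw [card_neg] at hE
  refine ⟨x, by rwa [sub_eq_add_neg], Nat.le_of_mul_le_mul_right ?_
    (mul_pos hA.card_pos hB.card_pos)⟩
  calc #A * #B * (#A * #B) = #A ^ 2 * #B ^ 2 := by ring
    _ ≤ #(A + B) * E[A, B] := le_card_add_mul_addEnergy A B
    _ = #(A + B) * E[A, -B] := by rw [addEnergy_neg_right]
    _ ≤ #(A + B) * (A.addConvolution (-B) x * (#A * #B)) := Nat.mul_le_mul_left _ hE
    _ = #(A + B) * A.addConvolution (-B) x * (#A * #B) := by ring

end AddCommGroup

end Finset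

theorem popular_difference_exists {G : Type*} [AddCommGroup G] [DecidableEq G]
    (U V : Finset G) (hU : U.Nonempty) (hV : V.Nonempty) :
    ∃ d ∈ V - U,
      ((V ∩ ({d} + U)).card : ℝ) ≥ (U.card : ℝ) * V.card / (2 * (U + V).card) := by
  obtain ⟨d, hd, hpop⟩ := exists_card_mul_card_le_card_add_mul_addConvolution_neg hV hU
  rw [← card_inter_vadd, ← singleton_add, add_comm V] at hpop
  refine ⟨d, hd, ?_⟩
  have hsum : (0 : ℝ) < #(U + V) := by exact_mod_cast (hU.add hV).card_pos
  have hpop' : (#V * #U : ℝ) ≤ #(U + V) * #(V ∩ ({d} + U)) := by exact_mod_cast hpop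
  rw [ge_iff_le, div_le_iff₀ (by positivity)]
  nlinarith
end

section
/- Let A be a finite subset of a commutative group G, let X ⊆ A be a nonempty subset such that K = |X+A|/|X| is minimal among all nonempty subsets of A, and let A' ⊆ A with A' = ⋃_{s∈S} A'_s where each A'_s ⊆ s+X. Then |A + 2·A'| ≤ K · ∑_{s∈S} |X + A'_s|. -/
/-!
Minimality of `|X + A| / |X|` over subsets of `X` is the hypothesis of the Plünnecke–Petridis
inequality, which gives `|X + A + C| ≤ K |X + C|` for every finite `C`. If `C ⊆ s + X`, every
element `a + b + b` of `A + 2·C` equals `(x + a + b) + s` where `b = s + x`, so `A + 2·C` lies in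
a translate of `X + A + C`. Summing over the pieces `A'_s` of the cover finishes the proof.
-/

open Finset Pointwise

namespace Finset

variable {G : Type*} [AddCommGroup G] [DecidableEq G]

theorem card_add_biUnion_le {ι : Type*} (A : Finset G) (S : Finset ι) (T : ι → Finset G) :
    #(A + S.biUnion T) ≤ ∑ i ∈ S, #(A + T i) := by
  classical
  induction S using Finset.induction_on with
  | empty => simp
  | insert i S hi ih =>
    rw [biUnion_insert, add_union, sum_insert hi]
    exact (card_union_le _ _).trans (Nat.add_le_add_left ih _)

theorem add_image_double_subset_of_subset_singleton_add {A C X : Finset G} {s : G}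
    (hC : C ⊆ {s} + X) : A + C.image (fun b => b + b) ⊆ X + A + C + {s} := by
  intro y hy
  obtain ⟨a, ha, _, hc, rfl⟩ := mem_add.1 hy
  obtain ⟨b, hb, rfl⟩ := mem_image.1 hc
  obtain ⟨t, ht, x, hx, rfl⟩ := mem_add.1 (hC hb)
  exact mem_add.2 ⟨x + a + (t + x), add_mem_add (add_mem_add hx ha) hb, t, ht, by abel⟩

theorem card_add_image_double_le_of_subset_singleton_add {A C X : Finset G} {s : G}
    (hC : C ⊆ {s} + X) : #(A + C.image (fun b => b + b)) ≤ #(X + A + C) :=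
  (card_le_card (add_image_double_subset_of_subset_singleton_add hC)).trans_eq
    (card_add_singleton _ _)

theorem card_add_mul_card_le_of_ratio_minimal {A X : Finset G} (hX : X.Nonempty)
    (hmin : ∀ Y ⊆ X, Y.Nonempty → (#(X + A) : ℝ) / #X ≤ (#(Y + A) : ℝ) / #Y) :
    ∀ Y ⊆ X, #(X + A) * #Y ≤ #(Y + A) * #X := by
  intro Y hY
  rcases Y.eq_empty_or_nonempty with rfl | hY₀
  · simp
  · have h := hmin Y hY hY₀
    rw [div_le_div_iff₀ (by exact_mod_cast hX.card_pos) (by exact_mod_cast hY₀.card_pos)] at h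
    exact_mod_cast h

theorem card_add_add_le_ratio_mul_card_add {A X : Finset G} (hX : X.Nonempty)
    (hP : ∀ Y ⊆ X, #(X + A) * #Y ≤ #(Y + A) * #X) (C : Finset G) :
    (#(X + A + C) : ℝ) ≤ (#(X + A) : ℝ) / #X * #(X + C) := by
  have h := pluennecke_petridis_inequality_add C hP
  rw [add_comm C X, add_right_comm X C A] at h
  rw [div_mul_eq_mul_div, le_div_iff₀ (by exact_mod_cast hX.card_pos)]
  exact_mod_cast h

end Finset

theorem basic_lemma_general {G : Type*} [AddCommGroup G] [DecidableEq G]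
    (A A' X : Finset G) (hXA : X ⊆ A) (hX : X.Nonempty) (K : ℝ)
    (hK : K = ((X + A).card : ℝ) / X.card)
    (hmin : ∀ Y ⊆ A, Y.Nonempty → K ≤ ((Y + A).card : ℝ) / Y.card)
    (S : Finset G) (As : G → Finset G)
    (hAs : ∀ s ∈ S, As s ⊆ {s} + X)
    (hcover : A' = S.biUnion As) :
    ((A + A'.image (fun b => b + b)).card : ℝ) ≤ K * ∑ s ∈ S, ((X + As s).card : ℝ) := by
  subst hK
  have hP := card_add_mul_card_le_of_ratio_minimal hX fun Y hY => hmin Y (hY.trans hXA)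
  have hcover_double : A + A'.image (fun b => b + b) =
      A + S.biUnion (fun s => (As s).image (fun b => b + b)) := by
    rw [hcover, biUnion_image]
  calc ((A + A'.image (fun b => b + b)).card : ℝ)
      ≤ ∑ s ∈ S, ((A + (As s).image (fun b => b + b)).card : ℝ) := by
        rw [hcover_double]; exact_mod_cast card_add_biUnion_le _ _ _
    _ ≤ ∑ s ∈ S, ((X + A + As s).card : ℝ) := sum_le_sum fun s hs => by
        exact_mod_cast card_add_image_double_le_of_subset_singleton_add (hAs s hs)
    _ ≤ ∑ s ∈ S, (X + A).card / X.card * ((X + As s).card : ℝ) :=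
        sum_le_sum fun s _ => card_add_add_le_ratio_mul_card_add hX hP (As s)
    _ = (X + A).card / X.card * ∑ s ∈ S, ((X + As s).card : ℝ) := by rw [mul_sum]

theorem basic_lemma {G : Type*} [AddCommGroup G] [DecidableEq G]
    (A A' X : Finset G) (hXA : X ⊆ A) (hX : X.Nonempty) (K : ℝ)
    (hK : K = ((X + A).card : ℝ) / X.card)
    (hmin : ∀ Y ⊆ A, Y.Nonempty → K ≤ ((Y + A).card : ℝ) / Y.card)
    (hA'A : A' ⊆ A)
    (S : Finset G) (As : G → Finset G)
    (hAs : ∀ s ∈ S, As s ⊆ {s} + X)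
    (hcover : A' = S.biUnion As) :
    ((A + A'.image (fun b => b + b)).card : ℝ) ≤ K * ∑ s ∈ S, ((X + As s).card : ℝ) :=
  basic_lemma_general A A' X hXA hX K hK hmin S As hAs hcover
end

section
/- Let A be a finite subset of a commutative group, K = |A+A|/|A|, and X ⊆ A nonempty minimizing |X+A|/|X| over nonempty subsets of A. For all positive integers λ₁, λ₂: |A + (λ₁+λ₂)·A| ≤ K·|X+λ₁·A|·|X+λ₂·A|/|X| ≤ K^{λ₁+λ₂+1}·|A|. -/
/-!
Petridis' lemma applied to the minimiser `X` gives `|X + A + C| |X| ≤ |X + A| |X + C|` for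
every finite `C`, and minimality against `Y = A` gives `|X + A| ≤ K |X|`. Since
`(λ + 1)·A ⊆ A + λ·A`, this yields `|X + λ·A| ≤ K^λ |X|` by induction on `λ`. Since
`(λ₁ + λ₂)·A ⊆ λ₁·A + λ₂·A`, Ruzsa's triangle inequality with middle set `X`, followed by
Petridis' lemma with `C = λ₁·A`, bounds `|A + (λ₁ + λ₂)·A|` by `K |X + λ₁·A| |X + λ₂·A| / |X|`.
-/

open Finset Pointwise

namespace Finset

variable {G : Type*} [AddCommGroup G] [DecidableEq G]

lemma image_add_nsmul_subset (A : Finset G) (m n : ℕ) :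
    A.image (fun a => (m + n) • a)
      ⊆ A.image (fun a => m • a) + A.image (fun a => n • a) := by
  intro y hy
  obtain ⟨a, ha, rfl⟩ := mem_image.1 hy
  rw [add_nsmul]
  exact add_mem_add (mem_image_of_mem _ ha) (mem_image_of_mem _ ha)

lemma image_succ_nsmul_subset (A : Finset G) (n : ℕ) :
    A.image (fun a => (n + 1) • a) ⊆ A + A.image (fun a => n • a) := by
  simpa [add_comm n 1] using image_add_nsmul_subset A 1 n

lemma add_image_zero_nsmul_subset (X A : Finset G) :
    X + A.image (fun a => (0 : ℕ) • a) ⊆ X := by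
  calc X + A.image (fun a => (0 : ℕ) • a) ⊆ X + {0} :=
        add_subset_add_left (image_subset_iff.2 fun a _ => by simp)
    _ = X := add_zero X

variable {X B : Finset G}

lemma mul_card_le_of_forall_div_le
    (hmin : ∀ Y ⊆ X, Y.Nonempty →
      ((X + B).card : ℝ) / X.card ≤ ((Y + B).card : ℝ) / Y.card) :
    ∀ Y ⊆ X, (X + B).card * Y.card ≤ (Y + B).card * X.card := by
  intro Y hYX
  obtain rfl | hY := Y.eq_empty_or_nonempty
  · simp
  have h := hmin Y hYX hY
  rw [div_le_div_iff₀ (by exact_mod_cast (hY.mono hYX).card_pos)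
    (by exact_mod_cast hY.card_pos)] at h
  exact_mod_cast h

section Petridis

variable (hP : ∀ Y ⊆ X, (X + B).card * Y.card ≤ (Y + B).card * X.card)
include hP

lemma card_add_add_mul_card_le (C : Finset G) :
    (X + B + C).card * X.card ≤ (X + B).card * (X + C).card := by
  simpa [add_comm C, add_right_comm X C B] using pluennecke_petridis_inequality_add C hP

lemma card_add_add_add_mul_card_sq_le (C D : Finset G) :
    (B + C + D).card * X.card ^ 2 ≤ (X + B).card * (X + C).card * (X + D).card := by
  have ruzsa := ruzsa_triangle_inequality_add_add_add (B + C) X D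
  rw [add_comm (B + C) X, ← add_assoc] at ruzsa
  calc (B + C + D).card * X.card ^ 2
      = (B + C + D).card * X.card * X.card := by ring
    _ ≤ (X + B + C).card * (X + D).card * X.card := Nat.mul_le_mul_right _ ruzsa
    _ = (X + B + C).card * X.card * (X + D).card := by ring
    _ ≤ (X + B).card * (X + C).card * (X + D).card :=
        Nat.mul_le_mul_right _ (card_add_add_mul_card_le hP C)

variable {K : ℝ} (hX : X.Nonempty) (hK : ((X + B).card : ℝ) ≤ K * X.card)
include hX hK

lemma card_add_add_add_le_div (C D : Finset G) :
    ((B + C + D).card : ℝ) ≤ K * (X + C).card * (X + D).card / X.card := by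
  have hX₀ : (0 : ℝ) < X.card := by exact_mod_cast hX.card_pos
  have key : ((B + C + D).card : ℝ) * X.card ^ 2
      ≤ (X + B).card * (X + C).card * (X + D).card := by
    exact_mod_cast card_add_add_add_mul_card_sq_le hP C D
  rw [le_div_iff₀ hX₀]
  refine le_of_mul_le_mul_right ?_ hX₀
  calc ((B + C + D).card : ℝ) * X.card * X.card
      = (B + C + D).card * X.card ^ 2 := by ring
    _ ≤ (X + B).card * (X + C).card * (X + D).card := key
    _ ≤ (K * X.card) * (X + C).card * (X + D).card := by gcongr
    _ = K * (X + C).card * (X + D).card * X.card := by ring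

lemma card_add_image_nsmul_le (n : ℕ) :
    ((X + B.image (fun b => n • b)).card : ℝ) ≤ K ^ n * X.card := by
  have hX₀ : (0 : ℝ) < X.card := by exact_mod_cast hX.card_pos
  induction n with
  | zero => simpa using card_le_card (add_image_zero_nsmul_subset X B)
  | succ n ih =>
    have hsub : X + B.image (fun b => (n + 1) • b) ⊆ X + B + B.image (fun b => n • b) := by
      rw [add_assoc]
      exact add_subset_add_left (image_succ_nsmul_subset B n)
    refine le_of_mul_le_mul_right ?_ hX₀
    calc ((X + B.image (fun b => (n + 1) • b)).card : ℝ) * X.card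
        ≤ (X + B + B.image (fun b => n • b)).card * X.card := by gcongr
      _ ≤ (X + B).card * (X + B.image (fun b => n • b)).card := by
          exact_mod_cast card_add_add_mul_card_le hP _
      _ ≤ (K * X.card) * (K ^ n * X.card) := by gcongr; exact hK.trans' (by positivity)
      _ = K ^ (n + 1) * X.card * X.card := by ring

end Petridis

end Finset

theorem dilate_sum_add_general {G : Type*} [AddCommGroup G] [DecidableEq G]
    (A X : Finset G) (hXA : X ⊆ A) (hX : X.Nonempty)
    (K : ℝ) (hK : K = ((A + A).card : ℝ) / A.card)
    (hmin : ∀ Y ⊆ A, Y.Nonempty →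
      ((X + A).card : ℝ) / X.card ≤ ((Y + A).card : ℝ) / Y.card)
    (l₁ l₂ : ℕ) :
    ((A + A.image (fun a => (l₁ + l₂) • a)).card : ℝ)
        ≤ K * ((X + A.image (fun a => l₁ • a)).card : ℝ)
            * ((X + A.image (fun a => l₂ • a)).card : ℝ) / X.card
      ∧ K * ((X + A.image (fun a => l₁ • a)).card : ℝ)
            * ((X + A.image (fun a => l₂ • a)).card : ℝ) / X.card
        ≤ K ^ (l₁ + l₂ + 1) * A.card := by
  have hX₀ : (0 : ℝ) < X.card := by exact_mod_cast hX.card_pos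
  have hA₀ : (0 : ℝ) < A.card := by exact_mod_cast (hX.mono hXA).card_pos
  have hP := mul_card_le_of_forall_div_le fun Y hY => hmin Y (hY.trans hXA)
  have hXK : ((X + A).card : ℝ) ≤ K * X.card := by
    have h := hmin A Subset.rfl (hX.mono hXA)
    rwa [div_le_div_iff₀ hX₀ hA₀, ← le_div_iff₀ hA₀, mul_div_right_comm, ← hK] at h
  have hK₀ : 0 ≤ K := hK ▸ by positivity
  constructor
  · calc ((A + A.image (fun a => (l₁ + l₂) • a)).card : ℝ)
        ≤ (A + A.image (fun a => l₁ • a) + A.image (fun a => l₂ • a)).card := by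
          rw [add_assoc]
          gcongr
          exact image_add_nsmul_subset A l₁ l₂
      _ ≤ _ := card_add_add_add_le_div hP hX hXK _ _
  · have h₁ := card_add_image_nsmul_le hP hX hXK l₁
    have h₂ := card_add_image_nsmul_le hP hX hXK l₂
    rw [div_le_iff₀ hX₀]
    calc K * ((X + A.image (fun a => l₁ • a)).card : ℝ)
          * (X + A.image (fun a => l₂ • a)).card
        ≤ K * (K ^ l₁ * X.card) * (K ^ l₂ * X.card) := by gcongr
      _ = K ^ (l₁ + l₂ + 1) * X.card * X.card := by ring
      _ ≤ K ^ (l₁ + l₂ + 1) * A.card * X.card := by gcongr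

theorem dilate_sum_add {G : Type*} [AddCommGroup G] [DecidableEq G]
    (A X : Finset G) (hA : A.Nonempty) (hXA : X ⊆ A) (hX : X.Nonempty)
    (K : ℝ) (hK : K = ((A + A).card : ℝ) / A.card)
    (hmin : ∀ Y ⊆ A, Y.Nonempty →
      ((X + A).card : ℝ) / X.card ≤ ((Y + A).card : ℝ) / Y.card)
    (l₁ l₂ : ℕ) (hl₁ : 1 ≤ l₁) (hl₂ : 1 ≤ l₂) :
    ((A + A.image (fun a => (l₁ + l₂) • a)).card : ℝ)
        ≤ K * ((X + A.image (fun a => l₁ • a)).card : ℝ)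
            * ((X + A.image (fun a => l₂ • a)).card : ℝ) / X.card
      ∧ K * ((X + A.image (fun a => l₁ • a)).card : ℝ)
            * ((X + A.image (fun a => l₂ • a)).card : ℝ) / X.card
        ≤ K ^ (l₁ + l₂ + 1) * A.card :=
  dilate_sum_add_general A X hXA hX K hK hmin l₁ l₂
end

section
/- Let A be a finite subset of a commutative group, K = |A+A|/|A|, and X ⊆ A nonempty minimizing |X+A|/|X| over nonempty subsets of A. For all positive integers λ₁, λ₂: |A + (λ₁λ₂)·A| ≤ |A + λ₁·X|·|X + λ₂·A|/|X| ≤ K^{λ₁+λ₂}·|A|. -/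
/-!
The first inequality is Ruzsa's triangle inequality twisted by the homomorphism `x ↦ l₁ • x`:
Petridis's induction on `C` goes through for `|f(C) + f(W) + A|` as soon as `f` is additive, and
is applied to a subset `W ⊆ X` minimising `|f(W) + A| / |W|`. The second inequality is the
Plünnecke–Petridis inequality for the minimiser `X`: since `y + (n + 1) • b = n • b + (y + b)`,
each further dilate of `A` or `X` costs a factor `|X + A| / |X| ≤ K`.
-/

open Finset Pointwise

theorem card_mul_le_of_forall_div_le {α : Type*} (φ : Finset α → ℕ) {S U : Finset α}
    (hUS : U ⊆ S) (hU : ∀ V ⊆ S, V.Nonempty → (φ U : ℝ) / #U ≤ φ V / #V) :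
    ∀ V ⊆ U, φ U * #V ≤ φ V * #U := by
  intro V hVU
  obtain rfl | hV := V.eq_empty_or_nonempty
  · simp
  have h := hU V (hVU.trans hUS) hV
  rw [div_le_div_iff₀ (by simpa using (hV.mono hVU).card_pos) (by simpa using hV.card_pos)] at h
  exact_mod_cast h

section
variable {G H : Type*} [AddCommGroup G] [AddCommGroup H] [DecidableEq G] [DecidableEq H]
  (f : G →+ H)

theorem pluennecke_petridis_inequality_add_image {W : Finset G} {A : Finset H} (C : Finset G)
    (hW : ∀ W' ⊆ W, #(W.image f + A) * #W' ≤ #(W'.image f + A) * #W) :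
    #(C.image f + W.image f + A) * #W ≤ #(W.image f + A) * #(C + W) := by
  rw [add_assoc]
  set M := W.image f + A
  induction C using Finset.induction_on with
  | empty => simp
  | insert x C _ ih =>
    set W' := W.filter (fun w => x + w ∈ C + W)
    have hW'W : W' ⊆ W := filter_subset _ _
    have hsum : #(insert x C + W) + #W' = #(C + W) + #W := by
      have h : ({x} + W) ∩ (C + W) = {x} + W' := by
        ext y
        simp only [singleton_add, mem_inter, mem_vadd_finset, vadd_eq_add, W', mem_filter]
        aesop
      rw [insert_eq, union_add, ← card_singleton_add x W', ← h, card_union_add_card_inter,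
        card_singleton_add, add_comm]
    have hsub : {f x} + (W'.image f + A) ⊆ ({f x} + M) ∩ (C.image f + M) := by
      refine subset_inter (add_subset_add_left (add_subset_add_right (image_subset_image hW'W))) ?_
      simp only [subset_iff, mem_add, mem_singleton, mem_image]
      rintro _ ⟨_, rfl, _, ⟨_, ⟨w', hw', rfl⟩, a, ha, rfl⟩, rfl⟩
      obtain ⟨c, hc, w, hw, hxw⟩ := mem_add.1 (mem_filter.1 hw').2
      exact ⟨f c, ⟨c, hc, rfl⟩, f w + a, add_mem_add (mem_image_of_mem f hw) ha, by
        rw [← add_assoc, ← add_assoc, ← map_add, ← map_add, hxw]⟩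
    have hcard : #((insert x C).image f + M) + #(W'.image f + A) ≤ #(C.image f + M) + #M := by
      calc _ = #(({f x} + M) ∪ (C.image f + M)) + #({f x} + (W'.image f + A)) := by
            rw [image_insert, insert_eq, union_add, card_singleton_add]
        _ ≤ #(({f x} + M) ∪ (C.image f + M)) + #(({f x} + M) ∩ (C.image f + M)) := by
            gcongr
        _ = _ := by rw [card_union_add_card_inter, card_singleton_add, add_comm]
    linarith [Nat.mul_le_mul_right #W hcard, hW W' hW'W, congrArg (#M * ·) hsum]

theorem ruzsa_triangle_inequality_add_image (A : Finset H) (B C : Finset G) :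
    #(A + C.image f) * #B ≤ #(A + B.image f) * #(B + C) := by
  obtain rfl | hB := B.eq_empty_or_nonempty
  · simp
  obtain ⟨U, hU, hUmin⟩ := exists_min_image (B.powerset.filter Finset.Nonempty)
    (fun U ↦ (#(U.image f + A) : ℝ) / #U) ⟨B, by simpa using hB⟩
  simp only [mem_filter, mem_powerset, and_imp] at hU hUmin
  obtain ⟨hUB, hU⟩ := hU
  have hUB' : #(U.image f + A) * #B ≤ #(B.image f + A) * #U := by
    have h := hUmin B subset_rfl hB
    rw [div_le_div_iff₀ (by simpa using hU.card_pos) (by simpa using hB.card_pos)] at h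
    exact_mod_cast h
  have hpet := pluennecke_petridis_inequality_add_image f C
    (card_mul_le_of_forall_div_le (fun U ↦ #(U.image f + A)) hUB hUmin)
  have hAC : #(A + C.image f) ≤ #(C.image f + U.image f + A) := by
    rw [add_right_comm, add_comm (C.image f)]
    exact card_le_card_add_right (hU.image f)
  have hCU : #(C + U) ≤ #(B + C) := by
    rw [add_comm B]
    exact card_le_card (add_subset_add_left hUB)
  refine le_of_mul_le_mul_right (a := #U) ?_ hU.card_pos
  calc #(A + C.image f) * #B * #U
      ≤ #(C.image f + U.image f + A) * #U * #B := by rw [mul_right_comm]; gcongr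
    _ ≤ #(U.image f + A) * #(B + C) * #B := by grw [hpet, hCU]
    _ = #(U.image f + A) * #B * #(B + C) := by ring
    _ ≤ #(B.image f + A) * #U * #(B + C) := Nat.mul_le_mul_right _ hUB'
    _ = #(A + B.image f) * #(B + C) * #U := by rw [add_comm A]; ring

theorem add_image_succ_nsmul_subset (Y B : Finset G) (n : ℕ) :
    Y + B.image ((n + 1) • ·) ⊆ B.image (n • ·) + (Y + B) := by
  simp only [subset_iff, mem_add, mem_image]
  rintro _ ⟨y, hy, _, ⟨b, hb, rfl⟩, rfl⟩
  exact ⟨n • b, ⟨b, hb, rfl⟩, y + b, ⟨y, hy, b, hb, rfl⟩, by rw [succ_nsmul]; abel⟩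

theorem card_add_image_nsmul_le {X Y A B : Finset G} (hX : X.Nonempty)
    (hXA : ∀ X' ⊆ X, #(X + A) * #X' ≤ #(X' + A) * #X) (hXY : X ⊆ Y) (hYB : Y + B ⊆ X + A)
    {n : ℕ} (hn : 1 ≤ n) :
    (#(Y + B.image (n • ·)) : ℝ) ≤ (#(X + A) / #X : ℝ) ^ n * #X := by
  have hX₀ : (0 : ℝ) < #X := by simpa using hX.card_pos
  induction n, hn using Nat.le_induction with
  | base =>
    rw [pow_one, div_mul_cancel₀ _ hX₀.ne']
    simpa using card_le_card hYB
  | succ n _ ih =>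
    have hstep : #(Y + B.image ((n + 1) • ·)) * #X ≤ #(X + A) * #(Y + B.image (n • ·)) :=
      calc #(Y + B.image ((n + 1) • ·)) * #X
          ≤ #(B.image (n • ·) + X + A) * #X := by
            rw [add_assoc]
            refine Nat.mul_le_mul_right _ (card_le_card ?_)
            exact (add_image_succ_nsmul_subset Y B n).trans (add_subset_add_left hYB)
        _ ≤ #(X + A) * #(B.image (n • ·) + X) := pluennecke_petridis_inequality_add _ hXA
        _ ≤ #(X + A) * #(Y + B.image (n • ·)) := by
            rw [add_comm _ X]
            gcongr
    refine le_of_mul_le_mul_right ?_ hX₀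
    calc (#(Y + B.image ((n + 1) • ·)) : ℝ) * #X
        ≤ #(X + A) * #(Y + B.image (n • ·)) := by exact_mod_cast hstep
      _ ≤ #(X + A) * ((#(X + A) / #X : ℝ) ^ n * #X) := by gcongr
      _ = (#(X + A) / #X : ℝ) ^ (n + 1) * #X * #X := by rw [pow_succ]; field_simp

end

theorem dilate_sum_mul {G : Type*} [AddCommGroup G] [DecidableEq G]
    (A X : Finset G) (hA : A.Nonempty) (hXA : X ⊆ A) (hX : X.Nonempty)
    (K : ℝ) (hK : K = ((A + A).card : ℝ) / A.card)
    (hmin : ∀ Y ⊆ A, Y.Nonempty →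
      ((X + A).card : ℝ) / X.card ≤ ((Y + A).card : ℝ) / Y.card)
    (l₁ l₂ : ℕ) (hl₁ : 1 ≤ l₁) (hl₂ : 1 ≤ l₂) :
    ((A + A.image (fun a => (l₁ * l₂) • a)).card : ℝ)
        ≤ ((A + X.image (fun x => l₁ • x)).card : ℝ)
            * ((X + A.image (fun a => l₂ • a)).card : ℝ) / X.card
      ∧ ((A + X.image (fun x => l₁ • x)).card : ℝ)
            * ((X + A.image (fun a => l₂ • a)).card : ℝ) / X.card
        ≤ K ^ (l₁ + l₂) * A.card := by
  have hX₀ : (0 : ℝ) < #X := by simpa using hX.card_pos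
  constructor
  · have h := ruzsa_triangle_inequality_add_image (nsmulAddMonoidHom l₁) A X
      (A.image (l₂ • ·))
    simp only [image_image, Function.comp_def, nsmulAddMonoidHom_apply, ← mul_nsmul'] at h
    rw [le_div_iff₀ hX₀]
    exact_mod_cast h
  · set S : ℝ := #(X + A) / #X
    have hXA' := card_mul_le_of_forall_div_le (fun Y ↦ #(Y + A)) hXA hmin
    have h₁ : (#(A + X.image (l₁ • ·)) : ℝ) ≤ S ^ l₁ * #X :=
      card_add_image_nsmul_le hX hXA' hXA (add_comm A X).subset hl₁
    have h₂ : (#(X + A.image (l₂ • ·)) : ℝ) ≤ S ^ l₂ * #X :=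
      card_add_image_nsmul_le hX hXA' subset_rfl subset_rfl hl₂
    have hSK : S ≤ K := hK ▸ hmin A subset_rfl hA
    calc (#(A + X.image (l₁ • ·)) : ℝ) * #(X + A.image (l₂ • ·)) / #X
        ≤ S ^ l₁ * #X * (S ^ l₂ * #X) / #X := by gcongr
      _ = S ^ (l₁ + l₂) * #X := by field_simp; ring
      _ ≤ K ^ (l₁ + l₂) * #A := by
        have hS₀ : 0 ≤ S := by positivity
        exact mul_le_mul (pow_le_pow_left₀ hS₀ hSK _) (mod_cast card_le_card hXA) hX₀.le
          (pow_nonneg (hS₀.trans hSK) _)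
end
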